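/- Let a₊, a₋ ∈ (0,2) with a₊ ≠ 1 and a₋ ≠ 1, let C₊, C₋ > 0, let λ₊, λ₋, λ̃₊, λ̃₋ > 0, and let α ∈ (-1,1) with β = (1-α)/2. Then ∫_0^∞ (β·e^{-λ₊x} + (1-β)·e^{-λ̃₊x} - e^{-(βλ₊+(1-β)λ̃₊)x})·C₊·x^{-1-a₊} dx + ∫_0^∞ (β·e^{-λ₋y} + (1-β)·e^{-λ̃₋y} - e^{-(βλ₋+(1-β)λ̃₋)y})·C₋·y^{-1-a₋} dy = C₊·Γ(-a₊)·(β·λ₊^{a₊} + (1-β)·λ̃₊^{a₊} - (βλ₊+(1-β)λ̃₊)^{a₊}) + C₋·Γ(-a₋)·(β·λ₋^{a₋} + (1-β)·λ̃₋^{a₋} - (βλ₋+(1-β)λ̃₋)^{a₋}), where Γ denotes the real Gamma function and powers are real powers. Consequently, the α-divergence between two generalized tempered stable processes with these parameters and horizon T > 0 equals (4/(1-α²))·(1 - exp(-T·[C₊Γ(-a₊)(βλ₊^{a₊}+(1-β)λ̃₊^{a₊}-(βλ₊+(1-β)λ̃₊)^{a₊}) + C₋Γ(-a₋)(βλ₋^{a₋}+(1-β)λ̃₋^{a₋}-(βλ₋+(1-β)λ̃₋)^{a₋})])).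 -/

import Mathlib

/-!
The weights `β, 1 - β, -1` of the three exponentials sum to zero, and so do the weighted rates;
hence each `e^{-λx}` may be replaced by the compensated `e^{-λx} - 1 + c λx` for any `c`. Taking
`c = 0` when `a < 1` and `c = 1` when `a > 1` makes every term separately integrable against
`x^{-1-a}`. One integration by parts against `x^{-1-a} = d(-x^{-a}/a)` turns the `c = 0` integral
into Euler's integral `∫ e^{-λx} x^{-a} dx = Γ(1-a) λ^{a-1}`, and the `c = 1` integral into the
`c = 0` one for `a - 1`; in both cases `Γ(1-a) = -a Γ(-a)` yields `Γ(-a) λ^a`.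
-/

open Real Filter Topology MeasureTheory Set

namespace Real

lemma abs_exp_neg_sub_one_le {t : ℝ} (ht : 0 ≤ t) : |exp (-t) - 1| ≤ t := by
  rw [abs_of_nonpos (by simpa using ht)]
  linarith [one_sub_le_exp_neg t]

lemma abs_exp_neg_sub_one_le_one {t : ℝ} (ht : 0 ≤ t) : |exp (-t) - 1| ≤ 1 := by
  rw [abs_of_nonpos (by simpa using ht)]
  linarith [exp_pos (-t)]

lemma exp_neg_sub_one_add_nonneg (t : ℝ) : 0 ≤ exp (-t) - 1 + t := by
  linarith [one_sub_le_exp_neg t]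

lemma abs_exp_neg_sub_one_add_le {t : ℝ} (ht : 0 ≤ t) : |exp (-t) - 1 + t| ≤ t := by
  rw [abs_of_nonneg (exp_neg_sub_one_add_nonneg t)]
  linarith [exp_le_one_iff.2 (neg_nonpos.2 ht)]

lemma abs_exp_neg_sub_one_add_le_sq {t : ℝ} (ht : 0 ≤ t) : |exp (-t) - 1 + t| ≤ t ^ 2 := by
  rcases le_total t 1 with h1 | h1
  · simpa [sub_eq_add_neg, add_assoc] using abs_exp_sub_one_sub_id_le (x := -t) (by
      rwa [abs_neg, abs_of_nonneg ht])
  · exact (abs_exp_neg_sub_one_add_le ht).trans (by nlinarith)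

end Real

section PowerWeight

variable {u : ℝ → ℝ} {l a r : ℝ}

lemma norm_comp_mul_mul_rpow_le (hu : ∀ t > 0, |u t| ≤ t ^ r) (hl : 0 < l) {x : ℝ}
    (hx : 0 < x) (s : ℝ) : ‖u (l * x) * x ^ s‖ ≤ l ^ r * x ^ (r + s) := by
  rw [norm_mul, norm_of_nonneg (rpow_nonneg hx.le s), rpow_add hx, ← mul_assoc,
    ← mul_rpow hl.le hx.le]
  exact mul_le_mul_of_nonneg_right (hu _ (mul_pos hl hx)) (rpow_nonneg hx.le s)

lemma integrableOn_comp_mul_mul_rpow {p q : ℝ} (hu : Continuous u) (hl : 0 < l)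
    (hq : q < a) (hp : a < p) (hu_q : ∀ t > 0, |u t| ≤ t ^ q)
    (hu_p : ∀ t > 0, |u t| ≤ t ^ p) :
    IntegrableOn (fun x => u (l * x) * x ^ (-1 - a)) (Ioi 0) := by
  have hmeas : AEStronglyMeasurable (fun x => u (l * x) * x ^ (-1 - a)) volume :=
    ((hu.comp (continuous_const_mul l)).measurable.mul
      (measurable_id.pow_const _)).aestronglyMeasurable
  rw [← Ioc_union_Ioi_eq_Ioi zero_le_one]
  refine IntegrableOn.union ?_ ?_
  · have hdom : IntegrableOn (fun x => l ^ p * x ^ (p + (-1 - a))) (Ioc 0 1) :=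
      ((intervalIntegrable_iff_integrableOn_Ioc_of_le zero_le_one).1
        (intervalIntegral.intervalIntegrable_rpow' (by linarith))).const_mul _
    refine hdom.mono' hmeas.restrict ?_
    filter_upwards [ae_restrict_mem measurableSet_Ioc] with x hx
    exact norm_comp_mul_mul_rpow_le hu_p hl hx.1 _
  · have hdom : IntegrableOn (fun x => l ^ q * x ^ (q + (-1 - a))) (Ioi 1) :=
      (integrableOn_Ioi_rpow_of_lt (by linarith) one_pos).const_mul _
    refine hdom.mono' hmeas.restrict ?_
    filter_upwards [ae_restrict_mem measurableSet_Ioi] with x hx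
    exact norm_comp_mul_mul_rpow_le hu_q hl (one_pos.trans hx) _

lemma tendsto_comp_mul_mul_rpow_nhdsGT_zero {p : ℝ} (hl : 0 < l) (hp : a < p)
    (hu_p : ∀ t > 0, |u t| ≤ t ^ p) :
    Tendsto (fun x => u (l * x) * x ^ (-a)) (𝓝[>] 0) (𝓝 0) := by
  have hlim : Tendsto (fun x : ℝ => l ^ p * x ^ (p + -a)) (𝓝[>] 0) (𝓝 0) := by
    have := ((continuousAt_rpow_const 0 (p + -a) (Or.inr (by linarith))).tendsto.const_mul
      (l ^ p)).mono_left (nhdsWithin_le_nhds (s := Ioi 0))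
    rwa [zero_rpow (by linarith), mul_zero] at this
  refine squeeze_zero_norm' ?_ hlim
  filter_upwards [self_mem_nhdsWithin] with x hx
  exact norm_comp_mul_mul_rpow_le hu_p hl hx _

lemma tendsto_comp_mul_mul_rpow_atTop {q : ℝ} (hl : 0 < l) (hq : q < a)
    (hu_q : ∀ t > 0, |u t| ≤ t ^ q) :
    Tendsto (fun x => u (l * x) * x ^ (-a)) atTop (𝓝 0) := by
  have hlim : Tendsto (fun x : ℝ => l ^ q * x ^ (q + -a)) atTop (𝓝 0) := by
    have := (tendsto_rpow_neg_atTop (show 0 < a - q by linarith)).const_mul (l ^ q)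
    rwa [neg_sub, mul_zero, sub_eq_add_neg] at this
  refine squeeze_zero_norm' ?_ hlim
  filter_upwards [eventually_gt_atTop 0] with x hx
  exact norm_comp_mul_mul_rpow_le hu_q hl hx _

lemma integral_mul_rpow_neg_one_sub_eq_inv_mul {u' : ℝ → ℝ} (ha : a ≠ 0)
    (hu : ∀ x ∈ Ioi 0, HasDerivAt u (u' x) x)
    (h_int : IntegrableOn (fun x => u x * x ^ (-1 - a)) (Ioi 0))
    (h_int' : IntegrableOn (fun x => u' x * x ^ (-a)) (Ioi 0))
    (h_zero : Tendsto (fun x => u x * x ^ (-a)) (𝓝[>] 0) (𝓝 0))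
    (h_infty : Tendsto (fun x => u x * x ^ (-a)) atTop (𝓝 0)) :
    ∫ x in Ioi 0, u x * x ^ (-1 - a) = a⁻¹ * ∫ x in Ioi 0, u' x * x ^ (-a) := by
  have hv : ∀ x ∈ Ioi (0 : ℝ), HasDerivAt (fun x => -a⁻¹ * x ^ (-a)) (x ^ (-1 - a)) x := by
    intro x hx
    refine ((hasDerivAt_rpow_const (p := -a) (Or.inl (ne_of_gt hx))).const_mul
      (-a⁻¹)).congr_deriv ?_
    rw [← mul_assoc, neg_mul_neg, inv_mul_cancel₀ ha, one_mul]
    ring_nf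
  have hu'v : IntegrableOn (fun x => u' x * (-a⁻¹ * x ^ (-a))) (Ioi 0) := by
    refine (h_int'.const_mul (-a⁻¹)).congr ?_
    exact Eventually.of_forall fun x => mul_left_comm _ _ _
  have key := integral_Ioi_mul_deriv_eq_deriv_mul hu hv h_int hu'v
    (by simpa [Pi.mul_def, mul_left_comm] using h_zero.const_mul (-a⁻¹))
    (by simpa [Pi.mul_def, mul_left_comm] using h_infty.const_mul (-a⁻¹))
  rw [key, ← integral_const_mul]
  simp only [mul_left_comm _ (-a⁻¹), integral_const_mul]
  ring

end PowerWeight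

namespace Real

lemma inv_mul_neg_mul_Gamma_one_sub {a l : ℝ} (ha : a ≠ 0) (hl : 0 < l) :
    a⁻¹ * (-l * (Gamma (1 - a) * l ^ (a - 1))) = Gamma (-a) * l ^ a := by
  rw [show 1 - a = -a + 1 by ring, Gamma_add_one (neg_ne_zero.2 ha), rpow_sub_one hl.ne']
  field_simp

lemma integral_exp_neg_mul_mul_rpow_neg {a l : ℝ} (ha : a < 1) (hl : 0 < l) :
    ∫ x in Ioi 0, exp (-(l * x)) * x ^ (-a) = Gamma (1 - a) * l ^ (a - 1) := by
  rw [show a - 1 = -(1 - a) by ring, rpow_neg hl.le, ← inv_rpow hl.le, ← one_div, mul_comm,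
    ← integral_rpow_mul_exp_neg_mul_Ioi (by linarith) hl]
  refine setIntegral_congr_fun measurableSet_Ioi fun x _ => ?_
  rw [mul_comm, show 1 - a - 1 = -a by ring]

lemma integrableOn_exp_neg_mul_mul_rpow_neg {a l : ℝ} (ha : a < 1) (hl : 0 < l) :
    IntegrableOn (fun x => exp (-(l * x)) * x ^ (-a)) (Ioi 0) := by
  refine (integrableOn_rpow_mul_exp_neg_mul_rpow (s := -a) (by linarith) one_pos hl).congr_fun
    (fun x _ => ?_) measurableSet_Ioi
  simp only [rpow_one, neg_mul, mul_comm (x ^ (-a))]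

lemma hasDerivAt_exp_neg_mul_sub_one (l x : ℝ) :
    HasDerivAt (fun x => exp (-(l * x)) - 1) (-l * exp (-(l * x))) x := by
  simpa [mul_comm] using (((hasDerivAt_id x).const_mul l).neg.exp).sub_const 1

lemma integrableOn_exp_neg_mul_sub_one_mul_rpow {a l : ℝ} (ha₀ : 0 < a) (ha₁ : a < 1)
    (hl : 0 < l) :
    IntegrableOn (fun x => (exp (-(l * x)) - 1) * x ^ (-1 - a)) (Ioi 0) :=
  integrableOn_comp_mul_mul_rpow (u := fun t => exp (-t) - 1) (q := 0) (p := 1) (by fun_prop)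
    hl ha₀ ha₁ (fun t ht => by simpa using abs_exp_neg_sub_one_le_one ht.le)
    (fun t ht => by simpa using abs_exp_neg_sub_one_le ht.le)

lemma integral_exp_neg_mul_sub_one_mul_rpow {a l : ℝ} (ha₀ : 0 < a) (ha₁ : a < 1)
    (hl : 0 < l) :
    ∫ x in Ioi 0, (exp (-(l * x)) - 1) * x ^ (-1 - a) = Gamma (-a) * l ^ a := by
  have hbound₀ : ∀ t > 0, |exp (-t) - 1| ≤ t ^ (0 : ℝ) := fun t ht => by
    simpa using abs_exp_neg_sub_one_le_one ht.le
  have hbound₁ : ∀ t > 0, |exp (-t) - 1| ≤ t ^ (1 : ℝ) := fun t ht => by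
    simpa using abs_exp_neg_sub_one_le ht.le
  rw [integral_mul_rpow_neg_one_sub_eq_inv_mul ha₀.ne'
    (fun x _ => hasDerivAt_exp_neg_mul_sub_one l x)
    (integrableOn_exp_neg_mul_sub_one_mul_rpow ha₀ ha₁ hl)
    (((integrableOn_exp_neg_mul_mul_rpow_neg ha₁ hl).const_mul (-l)).congr
      (Eventually.of_forall fun x => (mul_assoc _ _ _).symm))
    (tendsto_comp_mul_mul_rpow_nhdsGT_zero (u := fun t => exp (-t) - 1) hl ha₁ hbound₁)
    (tendsto_comp_mul_mul_rpow_atTop (u := fun t => exp (-t) - 1) hl ha₀ hbound₀)]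
  simp only [mul_assoc, integral_const_mul]
  rw [integral_exp_neg_mul_mul_rpow_neg ha₁ hl, inv_mul_neg_mul_Gamma_one_sub ha₀.ne' hl]

lemma integrableOn_exp_neg_mul_sub_one_add_mul_rpow {a l : ℝ} (ha₁ : 1 < a) (ha₂ : a < 2)
    (hl : 0 < l) :
    IntegrableOn (fun x => (exp (-(l * x)) - 1 + l * x) * x ^ (-1 - a)) (Ioi 0) :=
  integrableOn_comp_mul_mul_rpow (u := fun t => exp (-t) - 1 + t) (q := 1) (p := 2)
    (by fun_prop) hl ha₁ ha₂ (fun t ht => by simpa using abs_exp_neg_sub_one_add_le ht.le)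
    (fun t ht => by simpa using abs_exp_neg_sub_one_add_le_sq ht.le)

lemma integral_exp_neg_mul_sub_one_add_mul_rpow {a l : ℝ} (ha₁ : 1 < a) (ha₂ : a < 2)
    (hl : 0 < l) :
    ∫ x in Ioi 0, (exp (-(l * x)) - 1 + l * x) * x ^ (-1 - a) = Gamma (-a) * l ^ a := by
  have ha₀ : 0 < a := one_pos.trans ha₁
  have hu : ∀ x ∈ Ioi (0 : ℝ), HasDerivAt (fun x => exp (-(l * x)) - 1 + l * x)
      (-l * (exp (-(l * x)) - 1)) x := fun x _ => by
    refine ((hasDerivAt_exp_neg_mul_sub_one l x).add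
      ((hasDerivAt_id x).const_mul l)).congr_deriv ?_
    ring
  have hbound₁ : ∀ t > 0, |exp (-t) - 1 + t| ≤ t ^ (1 : ℝ) := fun t ht => by
    simpa using abs_exp_neg_sub_one_add_le ht.le
  have hbound₂ : ∀ t > 0, |exp (-t) - 1 + t| ≤ t ^ (2 : ℝ) := fun t ht => by
    simpa using abs_exp_neg_sub_one_add_le_sq ht.le
  have hexp : -1 - (a - 1) = -a := by ring
  have h_int' := integrableOn_exp_neg_mul_sub_one_mul_rpow (a := a - 1) (by linarith)
    (by linarith) hl
  have h_eval := integral_exp_neg_mul_sub_one_mul_rpow (a := a - 1) (by linarith)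
    (by linarith) hl
  rw [hexp] at h_int' h_eval
  rw [integral_mul_rpow_neg_one_sub_eq_inv_mul ha₀.ne' hu
    (integrableOn_exp_neg_mul_sub_one_add_mul_rpow ha₁ ha₂ hl)
    ((h_int'.const_mul (-l)).congr (Eventually.of_forall fun x => (mul_assoc _ _ _).symm))
    (tendsto_comp_mul_mul_rpow_nhdsGT_zero (u := fun t => exp (-t) - 1 + t) hl ha₂ hbound₂)
    (tendsto_comp_mul_mul_rpow_atTop (u := fun t => exp (-t) - 1 + t) hl ha₁ hbound₁)]
  simp only [mul_assoc, integral_const_mul]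
  rw [h_eval, neg_sub, inv_mul_neg_mul_Gamma_one_sub ha₀.ne' hl]

end Real

section Combination

variable {a c : ℝ}

lemma integral_exp_neg_combination_mul_rpow {b l m : ℝ}
    (h_int : ∀ k > 0, IntegrableOn (fun x => (exp (-(k * x)) - 1 + c * (k * x)) * x ^ (-1 - a))
      (Ioi 0))
    (h_eval : ∀ k > 0,
      ∫ x in Ioi 0, (exp (-(k * x)) - 1 + c * (k * x)) * x ^ (-1 - a) = Gamma (-a) * k ^ a)
    (hl : 0 < l) (hm : 0 < m) (hμ : 0 < b * l + (1 - b) * m) (C : ℝ) :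
    ∫ x in Ioi 0, (b * exp (-(l * x)) + (1 - b) * exp (-(m * x))
        - exp (-((b * l + (1 - b) * m) * x))) * (C * x ^ (-1 - a))
      = C * Gamma (-a) * (b * l ^ a + (1 - b) * m ^ a - (b * l + (1 - b) * m) ^ a) := by
  set μ := b * l + (1 - b) * m
  let g (k x : ℝ) := (exp (-(k * x)) - 1 + c * (k * x)) * x ^ (-1 - a)
  have h_split : ∀ x, (b * exp (-(l * x)) + (1 - b) * exp (-(m * x)) - exp (-(μ * x)))
      * (C * x ^ (-1 - a)) = C * (b * g l x + (1 - b) * g m x - g μ x) := fun x => by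
    simp only [g, μ]
    ring
  have hg : ∀ k > 0, IntegrableOn (g k) (Ioi 0) := h_int
  simp_rw [h_split]
  rw [integral_const_mul, integral_sub (f := fun x => b * g l x + (1 - b) * g m x)
      (((hg l hl).const_mul b).add ((hg m hm).const_mul (1 - b))) (hg μ hμ),
    integral_add ((hg l hl).const_mul b) ((hg m hm).const_mul (1 - b)),
    integral_const_mul, integral_const_mul, h_eval l hl, h_eval m hm, h_eval μ hμ]
  ring

lemma exists_compensated_exp_neg_integral (ha : a ∈ Ioo 0 2) (ha₁ : a ≠ 1) :
    ∃ c : ℝ, ∀ k > 0,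
      IntegrableOn (fun x => (exp (-(k * x)) - 1 + c * (k * x)) * x ^ (-1 - a)) (Ioi 0) ∧
      ∫ x in Ioi 0, (exp (-(k * x)) - 1 + c * (k * x)) * x ^ (-1 - a) = Gamma (-a) * k ^ a := by
  rcases ha₁.lt_or_gt with h | h
  · refine ⟨0, fun k hk => ?_⟩
    simpa using ⟨integrableOn_exp_neg_mul_sub_one_mul_rpow ha.1 h hk,
      integral_exp_neg_mul_sub_one_mul_rpow ha.1 h hk⟩
  · refine ⟨1, fun k hk => ?_⟩
    simpa using ⟨integrableOn_exp_neg_mul_sub_one_add_mul_rpow h ha.2 hk,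
      integral_exp_neg_mul_sub_one_add_mul_rpow h ha.2 hk⟩

end Combination

theorem gts_alpha_divergence_eval_general
    (ap am Cp Cm lp lm ltp ltm T α β : ℝ)
    (hap : ap ∈ Set.Ioo (0 : ℝ) 2) (hap1 : ap ≠ 1)
    (ham : am ∈ Set.Ioo (0 : ℝ) 2) (ham1 : am ≠ 1)
    (hlp : 0 < lp) (hlm : 0 < lm) (hltp : 0 < ltp) (hltm : 0 < ltm)
    (hα : α ∈ Set.Ioo (-1 : ℝ) 1) (hβ : β = (1 - α) / 2) :
    (∫ x in Set.Ioi (0 : ℝ),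
        (β * Real.exp (-(lp * x)) + (1 - β) * Real.exp (-(ltp * x))
          - Real.exp (-((β * lp + (1 - β) * ltp) * x))) * (Cp * x ^ (-1 - ap)))
      + (∫ y in Set.Ioi (0 : ℝ),
          (β * Real.exp (-(lm * y)) + (1 - β) * Real.exp (-(ltm * y))
            - Real.exp (-((β * lm + (1 - β) * ltm) * y))) * (Cm * y ^ (-1 - am)))
      = Cp * Real.Gamma (-ap) *
            (β * lp ^ ap + (1 - β) * ltp ^ ap - (β * lp + (1 - β) * ltp) ^ ap)
        + Cm * Real.Gamma (-am) *
            (β * lm ^ am + (1 - β) * ltm ^ am - (β * lm + (1 - β) * ltm) ^ am) ∧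
    (4 / (1 - α ^ 2)) *
        (1 - Real.exp (-(T *
          ((∫ x in Set.Ioi (0 : ℝ),
              (β * Real.exp (-(lp * x)) + (1 - β) * Real.exp (-(ltp * x))
                - Real.exp (-((β * lp + (1 - β) * ltp) * x))) * (Cp * x ^ (-1 - ap)))
            + (∫ y in Set.Ioi (0 : ℝ),
                (β * Real.exp (-(lm * y)) + (1 - β) * Real.exp (-(ltm * y))
                  - Real.exp (-((β * lm + (1 - β) * ltm) * y))) * (Cm * y ^ (-1 - am)))))))
      = (4 / (1 - α ^ 2)) *
          (1 - Real.exp (-(T *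
            (Cp * Real.Gamma (-ap) *
                (β * lp ^ ap + (1 - β) * ltp ^ ap - (β * lp + (1 - β) * ltp) ^ ap)
              + Cm * Real.Gamma (-am) *
                  (β * lm ^ am + (1 - β) * ltm ^ am
                    - (β * lm + (1 - β) * ltm) ^ am))))) := by
  have hβ₀ : 0 < β := by rw [hβ]; linarith [hα.2]
  have hβ₁ : 0 < 1 - β := by rw [hβ]; linarith [hα.1]
  have hμp : 0 < β * lp + (1 - β) * ltp := add_pos (mul_pos hβ₀ hlp) (mul_pos hβ₁ hltp)
  have hμm : 0 < β * lm + (1 - β) * ltm := add_pos (mul_pos hβ₀ hlm) (mul_pos hβ₁ hltm)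
  obtain ⟨cp, hcp⟩ := exists_compensated_exp_neg_integral hap hap1
  obtain ⟨cm, hcm⟩ := exists_compensated_exp_neg_integral ham ham1
  have h_pos := integral_exp_neg_combination_mul_rpow (fun k hk => (hcp k hk).1)
    (fun k hk => (hcp k hk).2) hlp hltp hμp Cp
  have h_neg := integral_exp_neg_combination_mul_rpow (fun k hk => (hcm k hk).1)
    (fun k hk => (hcm k hk).2) hlm hltm hμm Cm
  rw [h_pos, h_neg]
  exact ⟨rfl, rfl⟩

/-- Evaluation of the α-divergence integral for two generalized tempered stable
processes, and the resulting closed form of the α-divergence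
`(4/(1-α²))·(1 - exp(-T·[...]))` on horizon `T`. -/
theorem gts_alpha_divergence_eval
    (ap am Cp Cm lp lm ltp ltm T α β : ℝ)
    (hap : ap ∈ Set.Ioo (0 : ℝ) 2) (hap1 : ap ≠ 1)
    (ham : am ∈ Set.Ioo (0 : ℝ) 2) (ham1 : am ≠ 1)
    (hCp : 0 < Cp) (hCm : 0 < Cm)
    (hlp : 0 < lp) (hlm : 0 < lm) (hltp : 0 < ltp) (hltm : 0 < ltm)
    (hα : α ∈ Set.Ioo (-1 : ℝ) 1) (hβ : β = (1 - α) / 2) (hT : 0 < T) :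
    (∫ x in Set.Ioi (0 : ℝ),
        (β * Real.exp (-(lp * x)) + (1 - β) * Real.exp (-(ltp * x))
          - Real.exp (-((β * lp + (1 - β) * ltp) * x))) * (Cp * x ^ (-1 - ap)))
      + (∫ y in Set.Ioi (0 : ℝ),
          (β * Real.exp (-(lm * y)) + (1 - β) * Real.exp (-(ltm * y))
            - Real.exp (-((β * lm + (1 - β) * ltm) * y))) * (Cm * y ^ (-1 - am)))
      = Cp * Real.Gamma (-ap) *
            (β * lp ^ ap + (1 - β) * ltp ^ ap - (β * lp + (1 - β) * ltp) ^ ap)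
        + Cm * Real.Gamma (-am) *
            (β * lm ^ am + (1 - β) * ltm ^ am - (β * lm + (1 - β) * ltm) ^ am) ∧
    (4 / (1 - α ^ 2)) *
        (1 - Real.exp (-(T *
          ((∫ x in Set.Ioi (0 : ℝ),
              (β * Real.exp (-(lp * x)) + (1 - β) * Real.exp (-(ltp * x))
                - Real.exp (-((β * lp + (1 - β) * ltp) * x))) * (Cp * x ^ (-1 - ap)))
            + (∫ y in Set.Ioi (0 : ℝ),
                (β * Real.exp (-(lm * y)) + (1 - β) * Real.exp (-(ltm * y))
                  - Real.exp (-((β * lm + (1 - β) * ltm) * y))) * (Cm * y ^ (-1 - am)))))))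
      = (4 / (1 - α ^ 2)) *
          (1 - Real.exp (-(T *
            (Cp * Real.Gamma (-ap) *
                (β * lp ^ ap + (1 - β) * ltp ^ ap - (β * lp + (1 - β) * ltp) ^ ap)
              + Cm * Real.Gamma (-am) *
                  (β * lm ^ am + (1 - β) * ltm ^ am
                    - (β * lm + (1 - β) * ltm) ^ am))))) :=
  gts_alpha_divergence_eval_general ap am Cp Cm lp lm ltp ltm T α β hap hap1 ham ham1 hlp hlm hltp
    hltm hα hβ
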